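/- arXiv:1604.02014 — 2 statements merged into one kernel-verified Lean document; each statement's English description precedes it below -/
import Mathlib

section
/- (Upward domination lemma) Suppose sup_{Q ∈ 𝒟} D_μ(Q) < ∞. Then there is a constant c(ε) > 0, depending only on d, s, ε, such that Σ_{Q ∈ 𝒟_sel(μ)} D_μ(Q)² μ(Q) ≥ c(ε) Σ_{Q ∈ 𝒟} D_μ(Q)² μ(Q). -/
/-!
Domination from above compares the densities `μ(Q)/ℓ(Q)^(s+ε)` of the two cubes, so it is
transitive. A strict domination between lattice cubes at least doubles the side length and hence
multiplies `D_μ` by at least `2^ε`; as `D_μ` is bounded, every cube `Q` of positive measure is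
dominated by a selected cube `R`, and then `D_μ(Q) ≤ (ℓ(Q)/ℓ(R))^ε D_μ(R)`. Charging
`D_μ(Q)² μ(Q)` to `R` costs at most `(ℓ(Q)/ℓ(R))^(2ε) D_μ(R)² μ(Q)`. The triples of one level
contained in `R` overlap at most `3^d` times (those whose indices agree mod 3 are disjoint), and
the levels below `R` form a geometric series, so `c(ε) = (1 - 2^(-2ε)) / 3^d` works.
-/
open MeasureTheory Metric Set Filter ENNReal
noncomputable section

/-- Points of `ℝ^d` with the Euclidean metric. -/
abbrev Pt (d : ℕ) := EuclideanSpace ℝ (Fin d)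

/-- The open cube in `ℝ^d` with center `c` (given coordinatewise) and side length `l`. -/
def cubeSet {d : ℕ} (c : Fin d → ℝ) (l : ℝ) : Set (Pt d) := {x | ∀ i, |x i - c i| < l / 2}

/-- The lattice of concentric triples of standard dyadic cubes, each cube recorded as the
pair (center, side length). -/
def triples (d : ℕ) : Set ((Fin d → ℝ) × ℝ) :=
  {p | ∃ (n : ℤ) (m : Fin d → ℤ), p.2 = 3 * 2 ^ n ∧ ∀ i, p.1 i = (2:ℝ) ^ n * (m i + 1 / 2)}

/-- The s-dimensional density `μ(Q)/ℓ(Q)^s` of a cube. -/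
def DensR {d : ℕ} (μ : Measure (Pt d)) (s : ℝ) (p : (Fin d → ℝ) × ℝ) : ℝ :=
  (μ (cubeSet p.1 p.2)).toReal / p.2 ^ s

/-- `[Q':Q] = |log₂(ℓ(Q')/ℓ(Q))|`, as a function of the two side lengths. -/
def ratio (l l' : ℝ) : ℝ := |Real.logb 2 (l' / l)|

/-- `Q'` dominates `Q` from above: `Q' ⊇ Q` and `D(Q') ≥ 2^{ε[Q':Q]} D(Q)`. -/
def DomAbove {d : ℕ} (μ : Measure (Pt d)) (s ε : ℝ) (Q' Q : (Fin d → ℝ) × ℝ) : Prop :=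
  cubeSet Q.1 Q.2 ⊆ cubeSet Q'.1 Q'.2 ∧
  (2:ℝ) ^ (ε * ratio Q.2 Q'.2) * DensR μ s Q ≤ DensR μ s Q'

/-- The selected cubes: those in the lattice that cannot be dominated from above by
another cube of the lattice. -/
def Dsel {d : ℕ} (μ : Measure (Pt d)) (s ε : ℝ) : Set ((Fin d → ℝ) × ℝ) :=
  {Q ∈ triples d | ¬ ∃ Q' ∈ triples d, Q' ≠ Q ∧ DomAbove μ s ε Q' Q}

section

variable {d : ℕ}

lemma cubeSet_eq_preimage (c : Fin d → ℝ) (l : ℝ) :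
    cubeSet c l = WithLp.ofLp ⁻¹' Set.univ.pi fun i => Ioo (c i - l / 2) (c i + l / 2) := by
  ext x
  simp only [cubeSet, abs_sub_lt_iff, mem_preimage, mem_univ_pi, mem_Ioo]
  refine forall_congr' fun i => ?_
  constructor <;> rintro ⟨h₁, h₂⟩ <;> constructor <;> linarith

lemma cubeSet_isBounded (c : Fin d → ℝ) (l : ℝ) : Bornology.IsBounded (cubeSet c l) := by
  rw [cubeSet_eq_preimage]
  exact (PiLp.antilipschitzWith_ofLp 2 _).isBounded_preimage
    (Bornology.IsBounded.pi fun i => Metric.isBounded_Ioo _ _)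

lemma cubeSet_isOpen (c : Fin d → ℝ) (l : ℝ) : IsOpen (cubeSet c l) := by
  rw [cubeSet_eq_preimage]
  exact (isOpen_set_pi finite_univ fun i _ => isOpen_Ioo).preimage (PiLp.continuous_ofLp 2 _)

lemma Ioo_subset_Ioo_of_cubeSet_subset {c c' : Fin d → ℝ} {l l' : ℝ}
    (h : cubeSet c l ⊆ cubeSet c' l') (i : Fin d) :
    Ioo (c i - l / 2) (c i + l / 2) ⊆ Ioo (c' i - l' / 2) (c' i + l' / 2) := by
  classical
  intro t ht
  have hl : 0 < l := by linarith [ht.1, ht.2]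
  have hx : WithLp.toLp 2 (Function.update c i t) ∈ cubeSet c l := by
    rw [cubeSet_eq_preimage]
    intro j _
    rcases eq_or_ne j i with rfl | hj
    · simpa using ht
    · simp only [Function.update_of_ne hj]
      constructor <;> linarith
  simp only [cubeSet_eq_preimage] at h hx
  simpa using h hx i (mem_univ i)

lemma side_le_of_cubeSet_subset {c c' : Fin d → ℝ} {l l' : ℝ} (i : Fin d) (hl : 0 < l)
    (h : cubeSet c l ⊆ cubeSet c' l') : l ≤ l' := by
  have := (Ioo_subset_Ioo_iff (by linarith)).1 (Ioo_subset_Ioo_of_cubeSet_subset h i)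
  linarith [this.1, this.2]

lemma center_eq_of_cubeSet_subset {c c' : Fin d → ℝ} {l : ℝ} (hl : 0 < l)
    (h : cubeSet c l ⊆ cubeSet c' l) : c = c' := by
  funext i
  have := (Ioo_subset_Ioo_iff (by linarith)).1 (Ioo_subset_Ioo_of_cubeSet_subset h i)
  linarith [this.1, this.2]

lemma disjoint_cubeSet_of_le_abs_sub {c c' : Fin d → ℝ} {l : ℝ} {i : Fin d}
    (h : l ≤ |c i - c' i|) : Disjoint (cubeSet c l) (cubeSet c' l) := by
  refine Set.disjoint_left.2 fun x hx hx' => ?_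
  have h₁ := hx i
  have h₂ := hx' i
  have := abs_sub_le (c i) (x i) (c' i)
  rw [abs_sub_comm] at h₁
  linarith

lemma tsum_measure_le_card_mul {α ι κ : Type*} [MeasurableSpace α] [Countable ι] [Fintype κ]
    (μ : Measure α) {B : ι → Set α} (hB : ∀ i, MeasurableSet (B i)) (f : ι → κ)
    (hdisj : ∀ i j, f i = f j → i ≠ j → Disjoint (B i) (B j)) {A : Set α} (hA : ∀ i, B i ⊆ A) :
    ∑' i, μ (B i) ≤ Fintype.card κ * μ A := by
  calc ∑' i, μ (B i) = ∑' k, ∑' i : f ⁻¹' {k}, μ (B i) := (ENNReal.tsum_fiberwise _ f).symm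
    _ ≤ ∑' _k : κ, μ A := ENNReal.tsum_le_tsum fun k => by
        rw [← measure_iUnion (fun (i j : f ⁻¹' {k}) hij => hdisj i j (i.2.trans j.2.symm)
          (Subtype.coe_injective.ne hij)) fun i => hB i]
        exact measure_mono (iUnion_subset fun i => hA i)
    _ = Fintype.card κ * μ A := by
        rw [tsum_fintype, Finset.sum_const, nsmul_eq_mul, Finset.card_univ]

def dyadicCenter (n : ℤ) (m : Fin d → ℤ) : Fin d → ℝ := fun i => 2 ^ n * (m i + 1 / 2)

def dyadicTriple (p : ℤ × (Fin d → ℤ)) : (Fin d → ℝ) × ℝ := (dyadicCenter p.1 p.2, 3 * 2 ^ p.1)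

lemma triples_eq_range : triples d = range (dyadicTriple (d := d)) := by
  ext Q
  constructor
  · rintro ⟨n, m, h₁, h₂⟩
    exact ⟨(n, m), Prod.ext (funext fun i => (h₂ i).symm) h₁.symm⟩
  · rintro ⟨⟨n, m⟩, rfl⟩
    exact ⟨n, m, rfl, fun i => rfl⟩

lemma dyadicTriple_injective : Function.Injective (dyadicTriple (d := d)) := by
  rintro ⟨n, m⟩ ⟨n', m'⟩ h
  simp only [dyadicTriple, Prod.mk.injEq] at h
  obtain ⟨hm, hn⟩ := h
  obtain rfl : n = n' :=
    zpow_right_injective₀ (a := (2:ℝ)) two_pos (by norm_num) (mul_left_cancel₀ three_ne_zero hn)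
  refine Prod.ext rfl (funext fun i => ?_)
  have := mul_left_cancel₀ (zpow_ne_zero n two_ne_zero) (congrFun hm i)
  exact_mod_cast add_right_cancel this

lemma side_pos_of_mem_triples {Q : (Fin d → ℝ) × ℝ} (hQ : Q ∈ triples d) : 0 < Q.2 := by
  obtain ⟨n, m, h, -⟩ := hQ
  rw [h]
  positivity

lemma two_mul_side_le_of_cubeSet_subset (hd : 0 < d) {Q Q' : (Fin d → ℝ) × ℝ}
    (hQ : Q ∈ triples d) (hQ' : Q' ∈ triples d) (hne : Q' ≠ Q)
    (h : cubeSet Q.1 Q.2 ⊆ cubeSet Q'.1 Q'.2) : 2 * Q.2 ≤ Q'.2 := by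
  rw [triples_eq_range] at hQ hQ'
  obtain ⟨⟨n, m⟩, rfl⟩ := hQ
  obtain ⟨⟨n', m'⟩, rfl⟩ := hQ'
  simp only [dyadicTriple] at h hne ⊢
  have hle : n ≤ n' := by
    have := side_le_of_cubeSet_subset ⟨0, hd⟩ (by positivity) h
    exact (zpow_le_zpow_iff_right₀ (by norm_num : (1:ℝ) < 2)).1 (by linarith)
  have hlt : n < n' := by
    refine hle.lt_of_ne fun hn => hne ?_
    subst hn
    rw [center_eq_of_cubeSet_subset (by positivity) h]
  calc 2 * (3 * (2:ℝ) ^ n) = 3 * 2 ^ (n + 1) := by rw [zpow_add_one₀ two_ne_zero]; ring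
    _ ≤ 3 * 2 ^ n' := by gcongr <;> [norm_num; omega]

lemma disjoint_cubeSet_dyadicCenter {n : ℤ} {m m' : Fin d → ℤ} (hne : m ≠ m')
    (hmod : ∀ i, (m i : ZMod 3) = m' i) :
    Disjoint (cubeSet (dyadicCenter n m) (3 * 2 ^ n))
      (cubeSet (dyadicCenter n m') (3 * 2 ^ n)) := by
  obtain ⟨i, hi⟩ := Function.ne_iff.1 hne
  apply disjoint_cubeSet_of_le_abs_sub (i := i)
  have h3 : (3:ℤ) ≤ |m i - m' i| :=
    Int.le_of_dvd (abs_pos.2 (sub_ne_zero.2 hi))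
      ((dvd_abs _ _).2 (dvd_sub_comm.1 ((ZMod.intCast_eq_intCast_iff_dvd_sub _ _ 3).1 (hmod i))))
  have h3' : (3:ℝ) ≤ |(m i : ℝ) - m' i| := by exact_mod_cast h3
  have : dyadicCenter n m i - dyadicCenter n m' i = 2 ^ n * ((m i : ℝ) - m' i) := by
    simp only [dyadicCenter]; ring
  rw [this, abs_mul, abs_of_pos (by positivity), mul_comm]
  gcongr

lemma tsum_measure_cubeSet_dyadicCenter_le (μ : Measure (Pt d)) (n : ℤ) (A : Set (Pt d)) :
    ∑' m : Fin d → ℤ, {m | cubeSet (dyadicCenter n m) (3 * 2 ^ n) ⊆ A}.indicator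
      (fun m => μ (cubeSet (dyadicCenter n m) (3 * 2 ^ n))) m ≤ 3 ^ d * μ A := by
  have := tsum_measure_le_card_mul μ
    (B := fun m : {m | cubeSet (dyadicCenter n m) (3 * 2 ^ n) ⊆ A} =>
      cubeSet (dyadicCenter n m) (3 * 2 ^ n)) (fun _ => (cubeSet_isOpen _ _).measurableSet)
    (fun m i => (m.1 i : ZMod 3))
    (fun m m' hmod hne => disjoint_cubeSet_dyadicCenter (Subtype.coe_injective.ne hne)
      (fun i => congrFun hmod i)) (fun m => m.2)
  rw [← tsum_subtype]
  simpa [Fintype.card_fun] using this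

def scaleWeight (a l L : ℝ) : ℝ≥0∞ := if l ≤ L then ENNReal.ofReal ((l / L) ^ a) else 0

lemma scaleWeight_dyadic_sub (a : ℝ) (N : ℤ) (k : ℕ) :
    scaleWeight a (3 * 2 ^ (N - k)) (3 * 2 ^ N) = ENNReal.ofReal ((2 ^ (-a)) ^ k) := by
  have hratio : (3 * (2:ℝ) ^ (N - k)) / (3 * 2 ^ N) = ((2:ℝ) ^ k)⁻¹ := by
    rw [zpow_sub₀ two_ne_zero, zpow_natCast]
    field_simp
  have hle : (3 * (2:ℝ) ^ (N - k)) ≤ 3 * 2 ^ N := by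
    gcongr
    · norm_num
    · omega
  rw [scaleWeight, if_pos hle, hratio, Real.inv_rpow (by positivity), ← Real.rpow_natCast,
    ← Real.rpow_natCast, ← Real.rpow_mul zero_le_two, ← Real.rpow_mul zero_le_two,
    ← Real.rpow_neg zero_le_two, mul_comm, neg_mul]

lemma tsum_scaleWeight_dyadic {a : ℝ} (ha : 0 < a) (N : ℤ) :
    ∑' n : ℤ, scaleWeight a (3 * 2 ^ n) (3 * 2 ^ N) = ENNReal.ofReal (1 - 2 ^ (-a))⁻¹ := by
  have hsupp : Function.support (fun n : ℤ => scaleWeight a (3 * 2 ^ n) (3 * 2 ^ N)) ⊆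
      range (fun k : ℕ => N - k) := by
    intro n hn
    have hnN : n ≤ N := by
      by_contra h
      refine hn (if_neg ?_)
      have : (2:ℝ) ^ N < 2 ^ n := zpow_lt_zpow_right₀ (by norm_num) (by omega)
      linarith
    exact ⟨(N - n).toNat, show N - ((N - n).toNat : ℤ) = n by omega⟩
  have hr₀ : 0 ≤ (2:ℝ) ^ (-a) := by positivity
  have hr₁ : (2:ℝ) ^ (-a) < 1 := Real.rpow_lt_one_of_one_lt_of_neg (by norm_num) (by linarith)
  have hinj : Function.Injective fun k : ℕ => N - k := fun k k' h => by simpa using h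
  rw [← hinj.tsum_eq hsupp]
  simp_rw [scaleWeight_dyadic_sub]
  rw [← ENNReal.ofReal_tsum_of_nonneg (fun k => by positivity)
      (summable_geometric_of_lt_one hr₀ hr₁),
    tsum_geometric_of_lt_one hr₀ hr₁]

lemma tsum_scaleWeight_mul_measure_le (μ : Measure (Pt d)) {a : ℝ} (ha : 0 < a) (N : ℤ)
    (A : Set (Pt d)) :
    ∑' Q : triples d, scaleWeight a Q.1.2 (3 * 2 ^ N) *
        {Q : (Fin d → ℝ) × ℝ | cubeSet Q.1 Q.2 ⊆ A}.indicator (fun Q => μ (cubeSet Q.1 Q.2)) Q ≤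
      ENNReal.ofReal (1 - 2 ^ (-a))⁻¹ * (3 ^ d * μ A) := by
  rw [triples_eq_range, tsum_range (fun Q => scaleWeight a Q.2 (3 * 2 ^ N) *
        {Q : (Fin d → ℝ) × ℝ | cubeSet Q.1 Q.2 ⊆ A}.indicator (fun Q => μ (cubeSet Q.1 Q.2)) Q)
      dyadicTriple_injective, ← tsum_scaleWeight_dyadic ha N, ← ENNReal.tsum_mul_right]
  rw [ENNReal.tsum_prod']
  refine ENNReal.tsum_le_tsum fun n => ?_
  simp only [dyadicTriple]
  rw [ENNReal.tsum_mul_left]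
  gcongr
  exact tsum_measure_cubeSet_dyadicCenter_le μ n A

section Domination

variable {μ : Measure (Pt d)} {s ε : ℝ}

/-- With `2^{ε[R:Q]} = (ℓ(R)/ℓ(Q))^ε`, domination from above says that the density of exponent
`s + ε` does not decrease from `Q` to `R`; in this form the relation is transitive. -/
def Dominates (μ : Measure (Pt d)) (s ε : ℝ) (R Q : (Fin d → ℝ) × ℝ) : Prop :=
  cubeSet Q.1 Q.2 ⊆ cubeSet R.1 R.2 ∧ Q.2 ≤ R.2 ∧ DensR μ (s + ε) Q ≤ DensR μ (s + ε) R

lemma Dominates.refl (Q : (Fin d → ℝ) × ℝ) : Dominates μ s ε Q Q :=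
  ⟨subset_rfl, le_rfl, le_rfl⟩

lemma Dominates.trans {Q Q' R : (Fin d → ℝ) × ℝ} (h₁ : Dominates μ s ε R Q')
    (h₂ : Dominates μ s ε Q' Q) : Dominates μ s ε R Q :=
  ⟨h₂.1.trans h₁.1, h₂.2.1.trans h₁.2.1, h₂.2.2.trans h₁.2.2⟩

lemma DensR_nonneg {Q : (Fin d → ℝ) × ℝ} (hQ : 0 ≤ Q.2) : 0 ≤ DensR μ s Q :=
  div_nonneg ENNReal.toReal_nonneg (Real.rpow_nonneg hQ s)

lemma DensR_pos [IsLocallyFiniteMeasure μ] {Q : (Fin d → ℝ) × ℝ} (hQ : 0 < Q.2)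
    (hμ : μ (cubeSet Q.1 Q.2) ≠ 0) : 0 < DensR μ s Q :=
  div_pos (ENNReal.toReal_pos hμ (cubeSet_isBounded _ _).measure_lt_top.ne)
    (Real.rpow_pos_of_pos hQ s)

lemma DensR_add {Q : (Fin d → ℝ) × ℝ} (hQ : 0 < Q.2) :
    DensR μ (s + ε) Q = DensR μ s Q / Q.2 ^ ε := by
  rw [DensR, DensR, Real.rpow_add hQ, div_div]

lemma rpow_div_mul_DensR_le_iff {Q R : (Fin d → ℝ) × ℝ} (hQ : 0 < Q.2) (hR : 0 < R.2) :
    (R.2 / Q.2) ^ ε * DensR μ s Q ≤ DensR μ s R ↔ DensR μ (s + ε) Q ≤ DensR μ (s + ε) R := by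
  rw [DensR_add hQ, DensR_add hR, Real.div_rpow hR.le hQ.le, div_mul_eq_mul_div,
    div_le_iff₀ (by positivity), div_le_div_iff₀ (by positivity) (by positivity), mul_comm]

lemma two_rpow_mul_ratio {l L : ℝ} (hl : 0 < l) (hL : l ≤ L) :
    (2:ℝ) ^ (ε * ratio l L) = (L / l) ^ ε := by
  rw [ratio, abs_of_nonneg (Real.logb_nonneg (by norm_num) ((one_le_div hl).2 hL)), mul_comm,
    Real.rpow_mul zero_le_two, Real.rpow_logb two_pos (by norm_num) (div_pos (hl.trans_le hL) hl)]

lemma DomAbove.dominates (hd : 0 < d) (hε : 0 ≤ ε) {Q Q' : (Fin d → ℝ) × ℝ}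
    (hQ : Q ∈ triples d) (hQ' : Q' ∈ triples d) (hne : Q' ≠ Q) (h : DomAbove μ s ε Q' Q) :
    Dominates μ s ε Q' Q ∧ 2 ^ ε * DensR μ s Q ≤ DensR μ s Q' := by
  obtain ⟨hsub, hdens⟩ := h
  have hl := side_pos_of_mem_triples hQ
  have h₂ := two_mul_side_le_of_cubeSet_subset hd hQ hQ' hne hsub
  rw [two_rpow_mul_ratio hl (by linarith)] at hdens
  refine ⟨⟨hsub, by linarith, (rpow_div_mul_DensR_le_iff hl (by linarith)).1 hdens⟩,
    le_trans ?_ hdens⟩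
  gcongr
  · exact DensR_nonneg hl.le
  · rwa [le_div_iff₀ hl]

lemma exists_mem_Dsel_dominates (hd : 0 < d) (hε : 0 < ε) {M : ℝ}
    (hM : ∀ Q ∈ triples d, DensR μ s Q ≤ M) {Q : (Fin d → ℝ) × ℝ} (hQ : Q ∈ triples d)
    (hpos : 0 < DensR μ s Q) : ∃ R ∈ Dsel μ s ε, Dominates μ s ε R Q := by
  obtain ⟨N, hN⟩ := pow_unbounded_of_one_lt (M / DensR μ s Q)
    (Real.one_lt_rpow (by norm_num : (1:ℝ) < 2) hε)
  rw [div_lt_iff₀ hpos] at hN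
  clear hpos
  induction N generalizing Q with
  | zero => linarith [hM Q hQ, pow_zero ((2:ℝ) ^ ε)]
  | succ N ih =>
    by_cases hsel : Q ∈ Dsel μ s ε
    · exact ⟨Q, hsel, Dominates.refl Q⟩
    obtain ⟨Q', hQ', hne, hdom⟩ : ∃ Q' ∈ triples d, Q' ≠ Q ∧ DomAbove μ s ε Q' Q :=
      by_contra fun h => hsel ⟨hQ, h⟩
    obtain ⟨hQ'Q, hgrow⟩ := hdom.dominates hd hε.le hQ hQ' hne
    obtain ⟨R, hR, hRQ'⟩ := ih hQ' <| calc
      M < (2 ^ ε) ^ (N + 1) * DensR μ s Q := hN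
      _ = (2 ^ ε) ^ N * (2 ^ ε * DensR μ s Q) := by ring
      _ ≤ (2 ^ ε) ^ N * DensR μ s Q' := by gcongr
    exact ⟨R, hR, hRQ'.trans hQ'Q⟩

end Domination

def energy (μ : Measure (Pt d)) (s : ℝ) (Q : (Fin d → ℝ) × ℝ) : ℝ≥0∞ :=
  ENNReal.ofReal (DensR μ s Q ^ 2) * μ (cubeSet Q.1 Q.2)

lemma energy_le_of_dominates {μ : Measure (Pt d)} {s ε : ℝ} {Q R : (Fin d → ℝ) × ℝ}
    (hQ : 0 < Q.2) (h : Dominates μ s ε R Q) :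
    energy μ s Q ≤ ENNReal.ofReal (DensR μ s R ^ 2) * (scaleWeight (2 * ε) Q.2 R.2 *
      {Q' : (Fin d → ℝ) × ℝ | cubeSet Q'.1 Q'.2 ⊆ cubeSet R.1 R.2}.indicator
        (fun Q' => μ (cubeSet Q'.1 Q'.2)) Q) := by
  obtain ⟨hsub, hle, hdens⟩ := h
  have hR := hQ.trans_le hle
  have hDQ : DensR μ s Q ≤ (Q.2 / R.2) ^ ε * DensR μ s R := by
    rw [DensR_add hQ, DensR_add hR, div_le_div_iff₀ (by positivity) (by positivity)] at hdens
    rw [Real.div_rpow hQ.le hR.le, div_mul_eq_mul_div, le_div_iff₀ (by positivity)]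
    linarith
  have hsq : DensR μ s Q ^ 2 ≤ (Q.2 / R.2) ^ (2 * ε) * DensR μ s R ^ 2 := by
    calc DensR μ s Q ^ 2 ≤ ((Q.2 / R.2) ^ ε * DensR μ s R) ^ 2 :=
          pow_le_pow_left₀ (DensR_nonneg hQ.le) hDQ 2
      _ = (Q.2 / R.2) ^ (2 * ε) * DensR μ s R ^ 2 := by
          rw [mul_pow, ← Real.rpow_natCast, ← Real.rpow_mul (by positivity)]
          ring_nf
  rw [energy, scaleWeight, if_pos hle, indicator_of_mem hsub, ← mul_assoc,
    ← ENNReal.ofReal_mul (by positivity), mul_comm (DensR μ s R ^ 2)]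
  gcongr

lemma tsum_energy_le (hd : 0 < d) {s ε : ℝ} (hε : 0 < ε) (μ : Measure (Pt d))
    [IsLocallyFiniteMeasure μ] {M : ℝ} (hM : ∀ Q ∈ triples d, DensR μ s Q ≤ M) :
    ∑' Q : triples d, energy μ s Q ≤
      ENNReal.ofReal (3 ^ d / (1 - 2 ^ (-(2 * ε)))) * ∑' R : Dsel μ s ε, energy μ s R := by
  have hpoint (Q : triples d) : energy μ s Q ≤ ∑' R : Dsel μ s ε,
      ENNReal.ofReal (DensR μ s R ^ 2) * (scaleWeight (2 * ε) Q.1.2 R.1.2 *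
        {Q' : (Fin d → ℝ) × ℝ | cubeSet Q'.1 Q'.2 ⊆ cubeSet R.1.1 R.1.2}.indicator
          (fun Q' => μ (cubeSet Q'.1 Q'.2)) Q) := by
    obtain ⟨Q, hQ⟩ := Q
    by_cases h₀ : μ (cubeSet Q.1 Q.2) = 0
    · simp [energy, h₀]
    obtain ⟨R, hR, hRQ⟩ := exists_mem_Dsel_dominates hd hε hM hQ
      (DensR_pos (side_pos_of_mem_triples hQ) h₀)
    exact (energy_le_of_dominates (side_pos_of_mem_triples hQ) hRQ).trans
      (ENNReal.le_tsum (⟨R, hR⟩ : Dsel μ s ε))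
  calc ∑' Q : triples d, energy μ s Q
      ≤ ∑' (Q : triples d) (R : Dsel μ s ε), _ := ENNReal.tsum_le_tsum hpoint
    _ = ∑' R : Dsel μ s ε, ENNReal.ofReal (DensR μ s R ^ 2) *
          ∑' Q : triples d, scaleWeight (2 * ε) Q.1.2 R.1.2 *
            {Q' : (Fin d → ℝ) × ℝ | cubeSet Q'.1 Q'.2 ⊆ cubeSet R.1.1 R.1.2}.indicator
              (fun Q' => μ (cubeSet Q'.1 Q'.2)) Q := by
        rw [ENNReal.tsum_comm]
        simp_rw [ENNReal.tsum_mul_left]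
    _ ≤ ∑' R : Dsel μ s ε, ENNReal.ofReal (DensR μ s R ^ 2) *
          (ENNReal.ofReal (1 - 2 ^ (-(2 * ε)))⁻¹ * (3 ^ d * μ (cubeSet R.1.1 R.1.2))) := by
        gcongr with R
        obtain ⟨N, -, hN, -⟩ := R.2.1
        rw [hN]
        exact tsum_scaleWeight_mul_measure_le μ (by positivity) N _
    _ = _ := by
        rw [← ENNReal.tsum_mul_left]
        refine tsum_congr fun R => ?_
        rw [energy, div_eq_mul_inv, ENNReal.ofReal_mul (by positivity),
          ENNReal.ofReal_pow zero_le_three, ENNReal.ofReal_ofNat]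
        ring

end

/-- Upward domination lemma: the selected cubes carry a fixed proportion of the dyadic
Wolff energy. -/
theorem upward_domination (d : ℕ) (s : ℝ) (hs : s ∈ Set.Ioo 0 (d : ℝ)) (ε : ℝ) (hε : 0 < ε) :
    ∃ c : ℝ, 0 < c ∧
      ∀ μ : Measure (Pt d), IsLocallyFiniteMeasure μ →
        (∃ M : ℝ, ∀ Q ∈ triples d, DensR μ s Q ≤ M) →
        ENNReal.ofReal c *
            ∑' Q : triples d,
              ENNReal.ofReal (DensR μ s Q.1 ^ 2) * μ (cubeSet Q.1.1 Q.1.2) ≤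
          ∑' Q : Dsel μ s ε,
            ENNReal.ofReal (DensR μ s Q.1 ^ 2) * μ (cubeSet Q.1.1 Q.1.2) := by
  have hd : 0 < d := by exact_mod_cast hs.1.trans hs.2
  have hr : (2:ℝ) ^ (-(2 * ε)) < 1 :=
    Real.rpow_lt_one_of_one_lt_of_neg (by norm_num) (by linarith)
  have hc : 0 < (1 - 2 ^ (-(2 * ε))) / (3:ℝ) ^ d := div_pos (by linarith) (by positivity)
  have hcK : (1 - 2 ^ (-(2 * ε))) / (3:ℝ) ^ d * (3 ^ d / (1 - 2 ^ (-(2 * ε)))) = 1 := by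
    field_simp [show (1:ℝ) - 2 ^ (-(2 * ε)) ≠ 0 by linarith]
  refine ⟨_, hc, fun μ _ ⟨M, hM⟩ => ?_⟩
  calc _ ≤ ENNReal.ofReal ((1 - 2 ^ (-(2 * ε))) / 3 ^ d) *
        (ENNReal.ofReal (3 ^ d / (1 - 2 ^ (-(2 * ε)))) * ∑' R : Dsel μ s ε, energy μ s R) := by
        gcongr
        exact tsum_energy_le hd hε μ hM
    _ = ∑' R : Dsel μ s ε, energy μ s R := by
        rw [← mul_assoc, ← ENNReal.ofReal_mul hc.le, hcK, ENNReal.ofReal_one, one_mul]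
end
end

section
/- Suppose sup_{Q ∈ 𝒟} D_μ(Q) < ∞. Then every Q ∈ 𝒟_sel(μ) with μ(Q) > 0 is dominated from below by a bunch of cubes all belonging to 𝒟̂_sel(μ). -/
/-!
A selected cube `Q` outside `𝒟̂_sel` has a nontrivial dominating bunch. Its cubes `P` are
lattice cubes other than `Q` with `3P ⊆ 3Q`, hence of another size, so `[Q:P] ≥ 1` and
`D(P) ≥ 2^ε D(Q)`. Since densities are bounded, replacing such cubes by their own dominating
bunches terminates after finitely many rounds. Bunches compose: by the triangle inequality for
`[·:·]`, both the density condition and the weights `2^{-2ε[Q:P]}` of the energy inequality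
pass along chains `Q ⊇ P ⊇ R`.
-/

open MeasureTheory Metric Set Filter ENNReal
noncomputable section

/-- `Q` is dominated from below by the finite bunch `B`: all cubes of the bunch are selected,
have large density relative to `Q`, have disjoint triples contained in `3Q`, and carry a
large portion of the Wolff energy of `Q`. -/
def DomBelow {d : ℕ} (μ : Measure (Pt d)) (s ε : ℝ) (Q : (Fin d → ℝ) × ℝ)
    (B : Finset ((Fin d → ℝ) × ℝ)) : Prop :=
  B.Nonempty ∧
  (∀ P ∈ B, P ∈ Dsel μ s ε) ∧
  (∀ P ∈ B, (2:ℝ) ^ (ε * ratio Q.2 P.2) * DensR μ s Q ≤ DensR μ s P) ∧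
  ((B : Set ((Fin d → ℝ) × ℝ)).Pairwise fun P P' =>
    Disjoint (cubeSet P.1 (3 * P.2)) (cubeSet P'.1 (3 * P'.2))) ∧
  (∀ P ∈ B, cubeSet P.1 (3 * P.2) ⊆ cubeSet Q.1 (3 * Q.2)) ∧
  DensR μ s Q ^ 2 * (μ (cubeSet Q.1 Q.2)).toReal ≤
    ∑ P ∈ B, DensR μ s P ^ 2 * (2:ℝ) ^ (-(2 * ε) * ratio Q.2 P.2) *
      (μ (cubeSet P.1 P.2)).toReal

/-- The doubly selected cubes: selected cubes admitting no dominating bunch from below other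
than the trivial bunch `{Q}`. -/
def DhatSel {d : ℕ} (μ : Measure (Pt d)) (s ε : ℝ) : Set ((Fin d → ℝ) × ℝ) :=
  {Q ∈ Dsel μ s ε | ∀ B, DomBelow μ s ε Q B → B = {Q}}

section Cubes

variable {d : ℕ}

lemma pos_of_mem_triples {P : (Fin d → ℝ) × ℝ} (hP : P ∈ triples d) : 0 < P.2 := by
  obtain ⟨n, -, hn, -⟩ := hP
  rw [hn]
  positivity

lemma cubeSet_nonempty (c : Fin d → ℝ) {l : ℝ} (hl : 0 < l) : (cubeSet c l).Nonempty :=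
  ⟨WithLp.toLp 2 c, fun i => by simpa using half_pos hl⟩

lemma eq_of_cubeSet_subset {c c' : Fin d → ℝ} {l : ℝ} (hl : 0 < l)
    (h : cubeSet c' l ⊆ cubeSet c l) : c' = c := by
  funext i
  have hIoo : Ioo (c' i - l / 2) (c' i + l / 2) ⊆ Ioo (c i - l / 2) (c i + l / 2) := by
    intro y hy
    have hx : WithLp.toLp 2 (Function.update c' i y) ∈ cubeSet c' l := by
      intro j
      rcases eq_or_ne j i with rfl | hj
      · simpa [abs_lt] using ⟨by linarith [hy.1], by linarith [hy.2]⟩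
      · simpa [hj] using half_pos hl
    have hyc := abs_lt.mp (by simpa using h hx i)
    exact ⟨by linarith [hyc.1], by linarith [hyc.2]⟩
  have := (Ioo_subset_Ioo_iff (by linarith)).mp hIoo
  linarith [this.1, this.2]

lemma measure_cubeSet_lt_top (μ : Measure (Pt d)) [IsLocallyFiniteMeasure μ]
    (c : Fin d → ℝ) {l : ℝ} (hl : 0 < l) : μ (cubeSet c l) < ⊤ := by
  have hsub : cubeSet c l ⊆ WithLp.toLp 2 '' closedBall c (l / 2) := fun x hx =>
    ⟨WithLp.ofLp x, (dist_pi_le_iff (half_pos hl).le).mpr fun i => (hx i).le, rfl⟩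
  exact measure_lt_top_of_subset hsub
    ((isCompact_closedBall c _).image (PiLp.continuous_toLp 2 _)).measure_lt_top.ne

end Cubes

section Density

variable {d : ℕ} {μ : Measure (Pt d)} {s ε : ℝ}

lemma ratio_self {l : ℝ} (hl : l ≠ 0) : ratio l l = 0 := by
  simp [ratio, div_self hl]

lemma ratio_le_add {a b c : ℝ} (ha : a ≠ 0) (hb : b ≠ 0) (hc : c ≠ 0) :
    ratio a c ≤ ratio a b + ratio b c := by
  rw [ratio, ratio, ratio, ← div_mul_div_cancel₀ hb,
    Real.logb_mul (div_ne_zero hc hb) (div_ne_zero hb ha), add_comm]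
  exact abs_add_le _ _

lemma one_le_ratio_of_mem_triples {P P' : (Fin d → ℝ) × ℝ} (hP : P ∈ triples d)
    (hP' : P' ∈ triples d) (hne : P.2 ≠ P'.2) : 1 ≤ ratio P.2 P'.2 := by
  obtain ⟨n, -, hn, -⟩ := hP
  obtain ⟨n', -, hn', -⟩ := hP'
  have hnn : n' - n ≠ 0 := sub_ne_zero.mpr fun h => hne (by rw [hn, hn', h])
  have hquot : P'.2 / P.2 = (2:ℝ) ^ ((n' - n : ℤ) : ℝ) := by
    rw [hn, hn', Real.rpow_intCast, zpow_sub₀ two_ne_zero]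
    field_simp
  rw [ratio, hquot, Real.logb_rpow two_pos one_lt_two.ne']
  exact_mod_cast Int.one_le_abs hnn

lemma densR_nonneg (μ : Measure (Pt d)) (s : ℝ) {P : (Fin d → ℝ) × ℝ} (hP : 0 < P.2) :
    0 ≤ DensR μ s P :=
  div_nonneg ENNReal.toReal_nonneg (Real.rpow_nonneg hP.le s)

lemma densR_pos [IsLocallyFiniteMeasure μ] {P : (Fin d → ℝ) × ℝ} (hP : 0 < P.2)
    (hμ : 0 < μ (cubeSet P.1 P.2)) : 0 < DensR μ s P :=
  div_pos (ENNReal.toReal_pos hμ.ne' (measure_cubeSet_lt_top μ P.1 hP).ne)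
    (Real.rpow_pos_of_pos hP s)

lemma two_rpow_mul_densR_le_trans (hε : 0 ≤ ε) {P P' R : (Fin d → ℝ) × ℝ}
    (hP : 0 < P.2) (hP' : 0 < P'.2) (hR : 0 < R.2)
    (h₁ : (2:ℝ) ^ (ε * ratio P.2 P'.2) * DensR μ s P ≤ DensR μ s P')
    (h₂ : (2:ℝ) ^ (ε * ratio P'.2 R.2) * DensR μ s P' ≤ DensR μ s R) :
    (2:ℝ) ^ (ε * ratio P.2 R.2) * DensR μ s P ≤ DensR μ s R :=
  calc (2:ℝ) ^ (ε * ratio P.2 R.2) * DensR μ s P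
      ≤ (2:ℝ) ^ (ε * (ratio P.2 P'.2 + ratio P'.2 R.2)) * DensR μ s P := by
        gcongr
        · exact densR_nonneg μ s hP
        · exact one_le_two
        · exact ratio_le_add hP.ne' hP'.ne' hR.ne'
    _ = (2:ℝ) ^ (ε * ratio P'.2 R.2) * ((2:ℝ) ^ (ε * ratio P.2 P'.2) * DensR μ s P) := by
        rw [mul_add, Real.rpow_add two_pos]
        ring
    _ ≤ (2:ℝ) ^ (ε * ratio P'.2 R.2) * DensR μ s P' := by gcongr
    _ ≤ DensR μ s R := h₂

lemma two_rpow_neg_ratio_mul_le (hε : 0 ≤ ε) {a b c : ℝ} (ha : a ≠ 0) (hb : b ≠ 0)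
    (hc : c ≠ 0) :
    (2:ℝ) ^ (-(2 * ε) * ratio a b) * (2:ℝ) ^ (-(2 * ε) * ratio b c) ≤
      (2:ℝ) ^ (-(2 * ε) * ratio a c) := by
  rw [← Real.rpow_add two_pos, ← mul_add]
  exact Real.rpow_le_rpow_of_exponent_le one_le_two
    (mul_le_mul_of_nonpos_left (ratio_le_add ha hb hc) (by linarith))

end Density

section Bunches

variable {d : ℕ} {μ : Measure (Pt d)} {s ε : ℝ} {Q : (Fin d → ℝ) × ℝ}
  {B : Finset ((Fin d → ℝ) × ℝ)}

lemma domBelow_singleton (hQ : Q ∈ Dsel μ s ε) : DomBelow μ s ε Q {Q} := by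
  have hl : Q.2 ≠ 0 := (pos_of_mem_triples hQ.1).ne'
  refine ⟨Finset.singleton_nonempty Q, ?_, ?_, ?_, ?_, ?_⟩ <;> simp [hQ, ratio_self hl]

lemma DomBelow.notMem_of_ne_singleton (hB : DomBelow μ s ε Q B) (hne : B ≠ {Q}) : Q ∉ B := by
  obtain ⟨-, hsel, -, hdisj, hsub, -⟩ := hB
  intro hQB
  obtain ⟨P, hPB, hPQ⟩ : ∃ P ∈ B, P ≠ Q := by
    by_contra! h
    exact hne (Finset.eq_singleton_iff_unique_mem.mpr ⟨hQB, h⟩)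
  obtain ⟨x, hx⟩ := cubeSet_nonempty P.1 (l := 3 * P.2)
    (by linarith [pos_of_mem_triples (hsel P hPB).1])
  exact Set.disjoint_left.mp (hdisj hPB hQB hPQ) hx (hsub P hPB hx)

lemma DomBelow.one_le_ratio (hQ : Q ∈ triples d) (hB : DomBelow μ s ε Q B) (hne : B ≠ {Q})
    {P : (Fin d → ℝ) × ℝ} (hPB : P ∈ B) : 1 ≤ ratio Q.2 P.2 := by
  have hP := (hB.2.1 P hPB).1
  refine one_le_ratio_of_mem_triples hQ hP fun hside => hB.notMem_of_ne_singleton hne ?_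
  have hcenter : P.1 = Q.1 := by
    refine eq_of_cubeSet_subset (l := 3 * Q.2) (by linarith [pos_of_mem_triples hQ]) ?_
    simpa [hside] using hB.2.2.2.2.1 P hPB
  rwa [← Prod.ext hcenter hside.symm]

lemma DomBelow.two_rpow_mul_densR_le (hε : 0 ≤ ε) (hQ : Q ∈ triples d)
    (hB : DomBelow μ s ε Q B) (hne : B ≠ {Q}) {P : (Fin d → ℝ) × ℝ} (hPB : P ∈ B) :
    (2:ℝ) ^ ε * DensR μ s Q ≤ DensR μ s P :=
  calc (2:ℝ) ^ ε * DensR μ s Q ≤ (2:ℝ) ^ (ε * ratio Q.2 P.2) * DensR μ s Q := by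
        gcongr
        · exact densR_nonneg μ s (pos_of_mem_triples hQ)
        · exact one_le_two
        · exact le_mul_of_one_le_right hε (hB.one_le_ratio hQ hne hPB)
    _ ≤ DensR μ s P := hB.2.2.1 P hPB

lemma DomBelow.weighted_energy_le (hε : 0 ≤ ε) (hQ : 0 < Q.2) {P : (Fin d → ℝ) × ℝ}
    (hP : 0 < P.2) (hB : DomBelow μ s ε P B) :
    DensR μ s P ^ 2 * (2:ℝ) ^ (-(2 * ε) * ratio Q.2 P.2) * (μ (cubeSet P.1 P.2)).toReal ≤
      ∑ R ∈ B, DensR μ s R ^ 2 * (2:ℝ) ^ (-(2 * ε) * ratio Q.2 R.2) *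
        (μ (cubeSet R.1 R.2)).toReal := by
  have hRpos : ∀ R ∈ B, 0 < R.2 := fun R hR => pos_of_mem_triples (hB.2.1 R hR).1
  calc DensR μ s P ^ 2 * (2:ℝ) ^ (-(2 * ε) * ratio Q.2 P.2) * (μ (cubeSet P.1 P.2)).toReal
      = (2:ℝ) ^ (-(2 * ε) * ratio Q.2 P.2) *
          (DensR μ s P ^ 2 * (μ (cubeSet P.1 P.2)).toReal) := by ring
    _ ≤ (2:ℝ) ^ (-(2 * ε) * ratio Q.2 P.2) *
          ∑ R ∈ B, DensR μ s R ^ 2 * (2:ℝ) ^ (-(2 * ε) * ratio P.2 R.2) *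
            (μ (cubeSet R.1 R.2)).toReal := by
        gcongr
        exact hB.2.2.2.2.2
    _ = ∑ R ∈ B, ((2:ℝ) ^ (-(2 * ε) * ratio Q.2 P.2) * (2:ℝ) ^ (-(2 * ε) * ratio P.2 R.2)) *
          (DensR μ s R ^ 2 * (μ (cubeSet R.1 R.2)).toReal) := by
        rw [Finset.mul_sum]
        exact Finset.sum_congr rfl fun _ _ => by ring
    _ ≤ ∑ R ∈ B, (2:ℝ) ^ (-(2 * ε) * ratio Q.2 R.2) *
          (DensR μ s R ^ 2 * (μ (cubeSet R.1 R.2)).toReal) := by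
        gcongr with R hR
        exact two_rpow_neg_ratio_mul_le hε hQ.ne' hP.ne' (hRpos R hR).ne'
    _ = _ := Finset.sum_congr rfl fun _ _ => by ring

lemma DomBelow.biUnion (hε : 0 ≤ ε) (hQ : 0 < Q.2) (hB : DomBelow μ s ε Q B)
    {f : (Fin d → ℝ) × ℝ → Finset ((Fin d → ℝ) × ℝ)} (hf : ∀ P ∈ B, DomBelow μ s ε P (f P)) :
    DomBelow μ s ε Q (B.biUnion f) := by
  obtain ⟨hne, hsel, hdens, hdisj, hsub, hen⟩ := hB
  have hpos : ∀ P ∈ B, 0 < P.2 := fun P hP => pos_of_mem_triples (hsel P hP).1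
  have hposf : ∀ P ∈ B, ∀ R ∈ f P, 0 < R.2 := fun P hP R hR =>
    pos_of_mem_triples ((hf P hP).2.1 R hR).1
  have hsubf : ∀ P ∈ B, ∀ R ∈ f P, cubeSet R.1 (3 * R.2) ⊆ cubeSet P.1 (3 * P.2) :=
    fun P hP => (hf P hP).2.2.2.2.1
  have hfdisj : (B : Set ((Fin d → ℝ) × ℝ)).PairwiseDisjoint f := by
    intro P hP P' hP' hPP'
    refine Finset.disjoint_left.mpr fun R hR hR' => ?_
    obtain ⟨x, hx⟩ := cubeSet_nonempty R.1 (l := 3 * R.2) (by linarith [hposf P hP R hR])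
    exact Set.disjoint_left.mp (hdisj hP hP' hPP') (hsubf P hP R hR hx) (hsubf P' hP' R hR' hx)
  refine ⟨?_, ?_, ?_, ?_, ?_, ?_⟩
  · obtain ⟨P, hP⟩ := hne
    exact (hf P hP).1.mono (Finset.subset_biUnion_of_mem f hP)
  · intro R hR
    obtain ⟨P, hP, hR⟩ := Finset.mem_biUnion.mp hR
    exact (hf P hP).2.1 R hR
  · intro R hR
    obtain ⟨P, hP, hR⟩ := Finset.mem_biUnion.mp hR
    exact two_rpow_mul_densR_le_trans hε hQ (hpos P hP) (hposf P hP R hR) (hdens P hP)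
      ((hf P hP).2.2.1 R hR)
  · intro R hR R' hR' hRR'
    obtain ⟨P, hP, hR⟩ := Finset.mem_biUnion.mp hR
    obtain ⟨P', hP', hR'⟩ := Finset.mem_biUnion.mp hR'
    by_cases hPP' : P = P'
    · subst hPP'
      exact (hf P hP).2.2.2.1 hR hR' hRR'
    · exact (hdisj hP hP' hPP').mono (hsubf P hP R hR) (hsubf P' hP' R' hR')
  · intro R hR
    obtain ⟨P, hP, hR⟩ := Finset.mem_biUnion.mp hR
    exact (hsubf P hP R hR).trans (hsub P hP)
  · rw [Finset.sum_biUnion hfdisj]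
    exact hen.trans (Finset.sum_le_sum fun P hP =>
      (hf P hP).weighted_energy_le hε hQ (hpos P hP))

lemma exists_domBelow_dhatSel_of_lt (hε : 0 ≤ ε) {M : ℝ}
    (hM : ∀ Q ∈ triples d, DensR μ s Q ≤ M) (k : ℕ) :
    ∀ P ∈ Dsel μ s ε, M < ((2:ℝ) ^ ε) ^ k * DensR μ s P →
      ∃ B, DomBelow μ s ε P B ∧ ∀ R ∈ B, R ∈ DhatSel μ s ε := by
  induction k with
  | zero =>
    intro P hP hlt
    exact absurd (hM P hP.1) (by simpa using hlt)
  | succ k ih =>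
    intro P hP hlt
    by_cases hhat : P ∈ DhatSel μ s ε
    · exact ⟨{P}, domBelow_singleton hP, by simpa using hhat⟩
    obtain ⟨B, hB, hne⟩ : ∃ B, DomBelow μ s ε P B ∧ B ≠ {P} := by
      simpa [DhatSel, hP] using hhat
    have hrec : ∀ P' ∈ B, ∃ B', DomBelow μ s ε P' B' ∧ ∀ R ∈ B', R ∈ DhatSel μ s ε :=
      fun P' hP' => ih P' (hB.2.1 P' hP') <|
        calc M < ((2:ℝ) ^ ε) ^ (k + 1) * DensR μ s P := hlt
          _ = ((2:ℝ) ^ ε) ^ k * ((2:ℝ) ^ ε * DensR μ s P) := by ring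
          _ ≤ ((2:ℝ) ^ ε) ^ k * DensR μ s P' := by
            gcongr
            exact hB.two_rpow_mul_densR_le hε hP.1 hne hP'
    choose! f hf hfhat using hrec
    refine ⟨B.biUnion f, hB.biUnion hε (pos_of_mem_triples hP.1) hf, fun R hR => ?_⟩
    obtain ⟨P', hP', hR⟩ := Finset.mem_biUnion.mp hR
    exact hfhat P' hP' R hR

end Bunches

theorem dominated_by_doubly_selected_general (d : ℕ) (s : ℝ)
    (ε : ℝ) (hε : 0 < ε) (μ : Measure (Pt d)) (hloc : IsLocallyFiniteMeasure μ)
    (hsup : ∃ M : ℝ, ∀ Q ∈ triples d, DensR μ s Q ≤ M) :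
    ∀ Q ∈ Dsel μ s ε, 0 < μ (cubeSet Q.1 Q.2) →
      ∃ B : Finset ((Fin d → ℝ) × ℝ), DomBelow μ s ε Q B ∧ ∀ P ∈ B, P ∈ DhatSel μ s ε := by
  intro Q hQ hμ
  obtain ⟨M, hM⟩ := hsup
  have hD : 0 < DensR μ s Q := densR_pos (pos_of_mem_triples hQ.1) hμ
  obtain ⟨k, hk⟩ := pow_unbounded_of_one_lt (M / DensR μ s Q) (Real.one_lt_rpow one_lt_two hε)
  exact exists_domBelow_dhatSel_of_lt hε.le hM k Q hQ ((div_lt_iff₀ hD).mp hk)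

/-- Every selected cube of positive measure is dominated from below by a bunch of doubly
selected cubes. -/
theorem dominated_by_doubly_selected (d : ℕ) (s : ℝ) (hs : s ∈ Set.Ioo 0 (d : ℝ))
    (ε : ℝ) (hε : 0 < ε) (μ : Measure (Pt d)) (hloc : IsLocallyFiniteMeasure μ)
    (hsup : ∃ M : ℝ, ∀ Q ∈ triples d, DensR μ s Q ≤ M) :
    ∀ Q ∈ Dsel μ s ε, 0 < μ (cubeSet Q.1 Q.2) →
      ∃ B : Finset ((Fin d → ℝ) × ℝ), DomBelow μ s ε Q B ∧ ∀ P ∈ B, P ∈ DhatSel μ s ε :=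
  dominated_by_doubly_selected_general d s ε hε μ hloc hsup
end
end
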